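/- There exist constants c ∈ (0,1) and 0 < c₁ ≤ c₂ such that for all ν ≥ 1 and all x with ν < x < (1+c)ν, c₁·ν^{-1/2}(x-ν)^{3/2} ≤ x·g(ν/x) ≤ c₂·ν^{-1/2}(x-ν)^{3/2}, where g(t) = (√(1-t²) - t·arccos(t))/π. -/

import Mathlib

noncomputable def g (t : ℝ) : ℝ := (Real.sqrt (1 - t^2) - t * Real.arccos t) / Real.pi

open Real Set

/-- `√(2(1-t)) = 2 sin(arccos t / 2)` for `t ∈ [-1,1]`. -/
lemma sqrt_two_one_sub {t : ℝ} (h₁ : -1 ≤ t) (h₂ : t ≤ 1) :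
    Real.sqrt (2 * (1 - t)) = 2 * Real.sin (Real.arccos t / 2) := by
  have hs : Real.sin (Real.arccos t / 2) ^ 2 = (1 - t) / 2 := by
    rw [Real.sin_sq_eq_half_sub, mul_div_cancel₀ _ (two_ne_zero), Real.cos_arccos h₁ h₂]
    ring
  have hnn : 0 ≤ Real.sin (Real.arccos t / 2) :=
    Real.sin_nonneg_of_nonneg_of_le_pi (div_nonneg (Real.arccos_nonneg t) (by norm_num))
      (by linarith [Real.arccos_le_pi t, Real.pi_pos])
  rw [show 2 * (1 - t) = (2 * Real.sin (Real.arccos t / 2)) ^ 2 by nlinarith [hs]]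
  exact Real.sqrt_sq (by positivity)

lemma arccos_ge_sqrt {t : ℝ} (h₁ : -1 ≤ t) (h₂ : t ≤ 1) :
    Real.sqrt (2 * (1 - t)) ≤ Real.arccos t := by
  rw [sqrt_two_one_sub h₁ h₂]
  have h0 : (0:ℝ) ≤ Real.arccos t / 2 := div_nonneg (Real.arccos_nonneg t) (by norm_num)
  have := Real.sin_le h0
  linarith

lemma arccos_le_sqrt {t : ℝ} (h₁ : -1 ≤ t) (h₂ : t ≤ 1) :
    Real.arccos t ≤ Real.pi / 2 * Real.sqrt (2 * (1 - t)) := by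
  have hπ := Real.pi_pos
  rw [sqrt_two_one_sub h₁ h₂]
  have h0 : (0:ℝ) ≤ Real.arccos t / 2 := div_nonneg (Real.arccos_nonneg t) (by norm_num)
  have hle : Real.arccos t / 2 ≤ Real.pi / 2 := by linarith [Real.arccos_le_pi t]
  have h3 : Real.arccos t / Real.pi ≤ Real.sin (Real.arccos t / 2) := by
    have := Real.mul_le_sin h0 hle
    calc Real.arccos t / Real.pi = 2 / Real.pi * (Real.arccos t / 2) := by ring
      _ ≤ Real.sin (Real.arccos t / 2) := this
  have := (div_le_iff₀ hπ).1 h3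
  linarith

lemma g_hasDerivAt {s : ℝ} (h₁ : -1 < s) (h₂ : s < 1) :
    HasDerivAt g (-Real.arccos s / Real.pi) s := by
  have hsq : (0:ℝ) < 1 - s ^ 2 := by nlinarith
  have hroot : 0 < Real.sqrt (1 - s ^ 2) := Real.sqrt_pos.2 hsq
  have hin : HasDerivAt (fun t : ℝ => 1 - t ^ 2) (-(2 * s)) s := by
    have := (hasDerivAt_pow 2 s).const_sub 1
    simpa using this
  have hd1 : HasDerivAt (fun t : ℝ => Real.sqrt (1 - t ^ 2))
      (1 / (2 * Real.sqrt (1 - s ^ 2)) * -(2 * s)) s :=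
    (Real.hasDerivAt_sqrt hsq.ne').comp s hin
  have hd2 : HasDerivAt (fun t : ℝ => t * Real.arccos t)
      (1 * Real.arccos s + s * -(1 / Real.sqrt (1 - s ^ 2))) s :=
    (hasDerivAt_id s).mul (Real.hasDerivAt_arccos h₁.ne' h₂.ne)
  have hcomb := (hd1.sub hd2).div_const Real.pi
  have hπ := Real.pi_pos
  refine hcomb.congr_deriv ?_
  field_simp
  ring

lemma p_hasDerivAt {s : ℝ} (h₂ : s < 1) :
    HasDerivAt (fun t : ℝ => (1 - t) * Real.sqrt (1 - t)) (-(3 / 2) * Real.sqrt (1 - s)) s := by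
  have hsq : (0:ℝ) < 1 - s := by linarith
  have hroot : 0 < Real.sqrt (1 - s) := Real.sqrt_pos.2 hsq
  have hin : HasDerivAt (fun t : ℝ => 1 - t) (-1) s := by
    simpa using (hasDerivAt_id s).const_sub 1
  have hd1 : HasDerivAt (fun t : ℝ => Real.sqrt (1 - t)) (1 / (2 * Real.sqrt (1 - s)) * -1) s :=
    (Real.hasDerivAt_sqrt hsq.ne').comp s hin
  have hcomb := hin.mul hd1
  refine hcomb.congr_deriv ?_
  have hss : Real.sqrt (1 - s) * Real.sqrt (1 - s) = 1 - s := Real.mul_self_sqrt hsq.le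
  field_simp
  nlinarith [hss]

lemma g_one : g 1 = 0 := by
  simp [g, Real.arccos_one]

lemma g_continuous : Continuous g := by
  unfold g
  have h1 : Continuous fun t : ℝ => Real.sqrt (1 - t ^ 2) - t * Real.arccos t :=
    (Real.continuous_sqrt.comp (by continuity)).sub (continuous_id.mul Real.continuous_arccos)
  exact h1.div_const _

/-- Two-sided bound for `g` on `[0,1]`. -/
lemma g_bounds {t : ℝ} (ht0 : 0 ≤ t) (ht1 : t ≤ 1) :
    2 * Real.sqrt 2 / (3 * Real.pi) * ((1 - t) * Real.sqrt (1 - t)) ≤ g t ∧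
    g t ≤ Real.sqrt 2 / 3 * ((1 - t) * Real.sqrt (1 - t)) := by
  have hπ := Real.pi_pos
  have hs2 : (0:ℝ) < Real.sqrt 2 := Real.sqrt_pos.2 (by norm_num)
  set a : ℝ := 2 * Real.sqrt 2 / (3 * Real.pi) with ha
  set b : ℝ := Real.sqrt 2 / 3 with hb
  have hpcont : Continuous (fun s : ℝ => (1 - s) * Real.sqrt (1 - s)) :=
    (continuous_const.sub continuous_id).mul
      (Real.continuous_sqrt.comp (continuous_const.sub continuous_id))
  rcases eq_or_lt_of_le ht1 with rfl | ht1'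
  · constructor <;> simp [g_one]
  constructor
  · -- lower bound via F = a * p - g monotone on [t,1]
    have hD : ∀ s ∈ Ioo t 1,
        HasDerivAt (fun s => a * ((1 - s) * Real.sqrt (1 - s)) - g s)
          (a * (-(3 / 2) * Real.sqrt (1 - s)) - -Real.arccos s / Real.pi) s := fun s hs =>
      ((p_hasDerivAt hs.2).const_mul a).sub (g_hasDerivAt (by linarith [ht0, hs.1]) hs.2)
    have hmono : MonotoneOn (fun s => a * ((1 - s) * Real.sqrt (1 - s)) - g s) (Icc t 1) := by
      apply monotoneOn_of_deriv_nonneg (f := fun s => a * ((1 - s) * Real.sqrt (1 - s)) - g s) (convex_Icc t 1)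
        ((continuous_const.mul hpcont).sub g_continuous).continuousOn
      · intro s hs
        rw [interior_Icc] at hs
        exact (hD s hs).differentiableAt.differentiableWithinAt
      · intro s hs
        rw [interior_Icc] at hs
        rw [(hD s hs).deriv]
        have h1 : Real.sqrt (2 * (1 - s)) ≤ Real.arccos s :=
          arccos_ge_sqrt (by linarith [ht0, hs.1]) hs.2.le
        have h2 : Real.sqrt (2 * (1 - s)) = Real.sqrt 2 * Real.sqrt (1 - s) :=
          Real.sqrt_mul (by norm_num) _
        have h1' : Real.sqrt 2 * Real.sqrt (1 - s) ≤ Real.arccos s := by rw [← h2]; exact h1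
        have e : a * (-(3 / 2) * Real.sqrt (1 - s)) - -Real.arccos s / Real.pi
            = (Real.arccos s - Real.sqrt 2 * Real.sqrt (1 - s)) / Real.pi := by
          rw [ha]; field_simp; ring
        rw [e]
        exact div_nonneg (by linarith) hπ.le
    have h10 := hmono (left_mem_Icc.2 ht1'.le) (right_mem_Icc.2 ht1'.le) ht1'.le
    simp only [sub_self, Real.sqrt_zero, mul_zero, zero_mul, g_one, sub_zero] at h10
    linarith [h10]
  · -- upper bound via E = b * p - g antitone on [t,1]
    have hD : ∀ s ∈ Ioo t 1,
        HasDerivAt (fun s => b * ((1 - s) * Real.sqrt (1 - s)) - g s)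
          (b * (-(3 / 2) * Real.sqrt (1 - s)) - -Real.arccos s / Real.pi) s := fun s hs =>
      ((p_hasDerivAt hs.2).const_mul b).sub (g_hasDerivAt (by linarith [ht0, hs.1]) hs.2)
    have hanti : AntitoneOn (fun s => b * ((1 - s) * Real.sqrt (1 - s)) - g s) (Icc t 1) := by
      apply antitoneOn_of_deriv_nonpos (f := fun s => b * ((1 - s) * Real.sqrt (1 - s)) - g s) (convex_Icc t 1)
        ((continuous_const.mul hpcont).sub g_continuous).continuousOn
      · intro s hs
        rw [interior_Icc] at hs
        exact (hD s hs).differentiableAt.differentiableWithinAt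
      · intro s hs
        rw [interior_Icc] at hs
        rw [(hD s hs).deriv]
        have h1 : Real.arccos s ≤ Real.pi / 2 * Real.sqrt (2 * (1 - s)) :=
          arccos_le_sqrt (by linarith [ht0, hs.1]) hs.2.le
        have h2 : Real.sqrt (2 * (1 - s)) = Real.sqrt 2 * Real.sqrt (1 - s) :=
          Real.sqrt_mul (by norm_num) _
        have h1' : Real.arccos s ≤ Real.pi / 2 * (Real.sqrt 2 * Real.sqrt (1 - s)) := by
          rw [← h2]; exact h1
        have e : b * (-(3 / 2) * Real.sqrt (1 - s)) - -Real.arccos s / Real.pi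
            = (Real.arccos s - Real.pi / 2 * (Real.sqrt 2 * Real.sqrt (1 - s))) / Real.pi := by
          rw [hb]; field_simp; ring
        rw [e]
        exact div_nonpos_iff.2 (Or.inr ⟨by linarith, hπ.le⟩)
    have h10 := hanti (left_mem_Icc.2 ht1'.le) (right_mem_Icc.2 ht1'.le) ht1'.le
    simp only [sub_self, Real.sqrt_zero, mul_zero, zero_mul, g_one, sub_zero] at h10
    linarith [h10]

theorem phase_transition_comparison :
    ∃ c ∈ Set.Ioo (0:ℝ) 1, ∃ c₁ > (0:ℝ), ∃ c₂ : ℝ, c₁ ≤ c₂ ∧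
      ∀ ν : ℝ, 1 ≤ ν → ∀ x : ℝ, ν < x → x < (1 + c) * ν →
        c₁ * ν ^ (-(1:ℝ)/2) * (x - ν) ^ ((3:ℝ)/2) ≤ x * g (ν / x) ∧
        x * g (ν / x) ≤ c₂ * ν ^ (-(1:ℝ)/2) * (x - ν) ^ ((3:ℝ)/2) := by
  have hπ := Real.pi_pos
  have hπ4 := Real.pi_le_four
  have hs2 : (1:ℝ) ≤ Real.sqrt 2 := by
    rw [show (1:ℝ) = Real.sqrt 1 by simp]
    exact Real.sqrt_le_sqrt (by norm_num)
  have hs2' : Real.sqrt 2 ≤ 3 / 2 := by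
    rw [show (3:ℝ)/2 = Real.sqrt ((3/2)^2) by rw [Real.sqrt_sq]; norm_num]
    exact Real.sqrt_le_sqrt (by norm_num)
  refine ⟨1/2, by norm_num, 1/10, by norm_num, 1/2, by norm_num, ?_⟩
  intro ν hν x hνx hx32
  have hν0 : (0:ℝ) < ν := by linarith
  have hx0 : (0:ℝ) < x := by linarith
  have hx0' : x ≠ 0 := hx0.ne'
  set t : ℝ := ν / x with htdef
  have ht0 : 0 ≤ t := by positivity
  have ht1 : t ≤ 1 := by
    rw [htdef, div_le_one hx0]; linarith
  have h1t : 1 - t = (x - ν) / x := by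
    rw [htdef]; field_simp
  have hsν : 0 < Real.sqrt ν := Real.sqrt_pos.2 hν0
  have hsx : 0 < Real.sqrt x := Real.sqrt_pos.2 hx0
  have hsx' : Real.sqrt x ≠ 0 := hsx.ne'
  have hxν : 0 < x - ν := by linarith
  have hsxν : 0 ≤ Real.sqrt (x - ν) := Real.sqrt_nonneg _
  have hrν : ν ^ (-(1:ℝ)/2) = (Real.sqrt ν)⁻¹ := by
    rw [show (-(1:ℝ)/2) = -(1/2) by norm_num, Real.rpow_neg hν0.le, Real.sqrt_eq_rpow]
  have hrx : (x - ν) ^ ((3:ℝ)/2) = (x - ν) * Real.sqrt (x - ν) := by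
    rw [show ((3:ℝ)/2) = 1 + 1/2 by norm_num, Real.rpow_add hxν, Real.rpow_one,
      Real.sqrt_eq_rpow]
  have hP : x * ((1 - t) * Real.sqrt (1 - t)) = (x - ν) * Real.sqrt (x - ν) / Real.sqrt x := by
    rw [h1t, Real.sqrt_div hxν.le x]
    field_simp
  obtain ⟨hlow, hhigh⟩ := g_bounds ht0 ht1
  have hsx_le : Real.sqrt x ≤ 5 / 4 * Real.sqrt ν := by
    have h1 : Real.sqrt x ≤ Real.sqrt ((25/16) * ν) := Real.sqrt_le_sqrt (by linarith)
    have h2 : Real.sqrt ((25/16) * ν) = Real.sqrt (25/16) * Real.sqrt ν :=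
      Real.sqrt_mul (by norm_num) _
    have h3 : Real.sqrt (25/16 : ℝ) = 5/4 := by
      rw [show (25/16:ℝ) = (5/4)^2 by norm_num, Real.sqrt_sq]; norm_num
    rw [h2, h3] at h1
    exact h1
  have hsν_le : Real.sqrt ν ≤ Real.sqrt x := Real.sqrt_le_sqrt (by linarith)
  have hA : (0:ℝ) ≤ (x - ν) * Real.sqrt (x - ν) := by positivity
  constructor
  · -- lower bound
    have h1 : x * (2 * Real.sqrt 2 / (3 * Real.pi) * ((1 - t) * Real.sqrt (1 - t))) ≤
        x * g t := mul_le_mul_of_nonneg_left hlow hx0.le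
    have h2 : x * (2 * Real.sqrt 2 / (3 * Real.pi) * ((1 - t) * Real.sqrt (1 - t)))
        = 2 * Real.sqrt 2 / (3 * Real.pi) / Real.sqrt x
            * ((x - ν) * Real.sqrt (x - ν)) := by
      rw [show x * (2 * Real.sqrt 2 / (3 * Real.pi) * ((1 - t) * Real.sqrt (1 - t)))
          = 2 * Real.sqrt 2 / (3 * Real.pi) * (x * ((1 - t) * Real.sqrt (1 - t))) by ring, hP]
      ring
    rw [h2] at h1
    rw [hrν, hrx]
    refine le_trans ?_ h1
    have ha6 : (1:ℝ)/6 ≤ 2 * Real.sqrt 2 / (3 * Real.pi) := by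
      rw [le_div_iff₀ (by positivity)]
      nlinarith [hs2, hπ4]
    have hkey : (1:ℝ)/10 * (Real.sqrt ν)⁻¹
        ≤ 2 * Real.sqrt 2 / (3 * Real.pi) / Real.sqrt x := by
      rw [← div_eq_mul_inv, div_le_div_iff₀ hsν hsx]
      have hu := mul_le_mul_of_nonneg_right ha6 hsν.le
      nlinarith [hsx_le, hsν.le]
    exact mul_le_mul_of_nonneg_right hkey hA
  · -- upper bound
    have h1 : x * g t ≤ x * (Real.sqrt 2 / 3 * ((1 - t) * Real.sqrt (1 - t))) :=
      mul_le_mul_of_nonneg_left hhigh hx0.le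
    have h2 : x * (Real.sqrt 2 / 3 * ((1 - t) * Real.sqrt (1 - t)))
        = Real.sqrt 2 / 3 / Real.sqrt x * ((x - ν) * Real.sqrt (x - ν)) := by
      rw [show x * (Real.sqrt 2 / 3 * ((1 - t) * Real.sqrt (1 - t)))
          = Real.sqrt 2 / 3 * (x * ((1 - t) * Real.sqrt (1 - t))) by ring, hP]
      ring
    rw [h2] at h1
    rw [hrν, hrx]
    refine le_trans h1 ?_
    have hkey : Real.sqrt 2 / 3 / Real.sqrt x ≤ (1:ℝ)/2 * (Real.sqrt ν)⁻¹ := by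
      rw [show (1:ℝ)/2 * (Real.sqrt ν)⁻¹ = (1/2) / Real.sqrt ν by ring,
        div_le_div_iff₀ hsx hsν]
      have hu := mul_le_mul_of_nonneg_right
        (show Real.sqrt 2 / 3 ≤ (1:ℝ)/2 by linarith) hsν.le
      nlinarith [hsν_le]
    exact mul_le_mul_of_nonneg_right hkey hA
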